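/- arXiv:1310.5298 — 6 statements merged into one kernel-verified Lean document; each statement's English description precedes it below -/
import Mathlib

section
/- For α ∈ (0,1) and all x ∈ [0, π], the function h(α,x) = ((2+α)/2)·cos((α/2)(π−x)) − (α/2)·cos((α/2)(π−x) − x) satisfies ∂h/∂x (α,x) = ((α(2+α))/2)·sin(x/2)·cos((α/2)(π−x) − x/2) ≥ 0. -/
/-!
Differentiating term by term, the derivative is `α (2 + α) / 4 · (sin a - sin (a - x))` with
`a = α (π - x) / 2`, and sum-to-product turns the difference of sines into
`2 sin (x / 2) cos (a - x / 2)`. For `x ∈ [0, π]` both factors are nonnegative: `x / 2 ∈ [0, π / 2]`,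
and since `α ≤ 1` the angle `a - x / 2` decreases linearly from `απ / 2 ≤ π / 2` to `-π / 2`.
-/

open Real

theorem sin_sub_sin_sub (a x : ℝ) :
    sin a - sin (a - x) = 2 * sin (x / 2) * cos (a - x / 2) := by
  rw [sin_sub_sin]
  ring_nf

theorem hasDerivAt_cos_half_mul_comb (α x : ℝ) :
    HasDerivAt
      (fun y : ℝ => (2 + α) / 2 * cos (α / 2 * (π - y)) - α / 2 * cos (α / 2 * (π - y) - y))
      (α * (2 + α) / 2 * sin (x / 2) * cos (α / 2 * (π - x) - x / 2)) x := by
  have hInner : HasDerivAt (fun y : ℝ => α / 2 * (π - y)) (α / 2 * (-1)) x :=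
    ((hasDerivAt_id x).const_sub π).const_mul (α / 2)
  have hOuter : HasDerivAt (fun y : ℝ => α / 2 * (π - y) - y) (α / 2 * (-1) - 1) x :=
    hInner.sub (hasDerivAt_id x)
  refine ((hInner.cos.const_mul _).sub (hOuter.cos.const_mul _)).congr_deriv ?_
  linear_combination α * (2 + α) / 4 * sin_sub_sin_sub (α / 2 * (π - x)) x

theorem cos_half_mul_sub_nonneg {α x : ℝ} (hα : α ∈ Set.Icc (0 : ℝ) 1) (hx : x ∈ Set.Icc 0 π) :
    0 ≤ cos (α / 2 * (π - x) - x / 2) := by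
  obtain ⟨hα0, hα1⟩ := hα
  obtain ⟨hx0, hxπ⟩ := hx
  apply cos_nonneg_of_mem_Icc
  constructor <;> nlinarith

theorem h_deriv_nonneg (α : ℝ) (hα : α ∈ Set.Ioo (0 : ℝ) 1)
    (x : ℝ) (hx : x ∈ Set.Icc 0 π) :
    HasDerivAt
      (fun y : ℝ =>
        (2 + α) / 2 * Real.cos (α / 2 * (π - y)) - α / 2 * Real.cos (α / 2 * (π - y) - y))
      (α * (2 + α) / 2 * Real.sin (x / 2) * Real.cos (α / 2 * (π - x) - x / 2)) x ∧
    0 ≤ α * (2 + α) / 2 * Real.sin (x / 2) * Real.cos (α / 2 * (π - x) - x / 2) := by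
  refine ⟨hasDerivAt_cos_half_mul_comb α x, ?_⟩
  have hSin : 0 ≤ sin (x / 2) := sin_nonneg_of_nonneg_of_le_pi (by linarith [hx.1])
    (by linarith [hx.2, pi_pos])
  have hCos := cos_half_mul_sub_nonneg (Set.Ioo_subset_Icc_self hα) hx
  have hα0 := hα.1
  positivity
end

section
/- For α ∈ (0,1) and all x ∈ [0, π], the function h(α,x) = ((2+α)/2)·cos((α/2)(π−x)) − (α/2)·cos((α/2)(π−x) − x) satisfies h(α,x) ≥ cos(απ/2) ≥ 0; in particular h(α,x) ≥ 0. -/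
/-!
Put `θ = (α/2)(π - x)`, so that `απ/2 = θ + αx/2` with `θ ∈ [0, π/2]`. Expanding both cosines,
`h(α,x) - cos(απ/2) = cos θ · (1 + (α/2)(1 - cos x) - cos(αx/2)) + sin θ · (sin(αx/2) - (α/2) sin x)`.
Both brackets are nonnegative: the first because `cos(αx/2) ≤ 1 ≤ 1 + (α/2)(1 - cos x)`, the second
because `(α/2) sin x ≤ α sin(x/2) ≤ sin(αx/2)`, the last step by concavity of `sin` on `[0, π]`.
-/

open Real

namespace Real

theorem mul_sin_le_sin_mul {t y : ℝ} (ht₀ : 0 ≤ t) (ht₁ : t ≤ 1) (hy₀ : 0 ≤ y) (hyπ : y ≤ π) :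
    t * sin y ≤ sin (t * y) := by
  have h := strictConcaveOn_sin_Icc.concaveOn.2 (x := 0) (y := y) ⟨le_rfl, pi_pos.le⟩ ⟨hy₀, hyπ⟩
    (sub_nonneg.2 ht₁) ht₀ (by ring)
  simpa only [smul_eq_mul, mul_zero, zero_add, sin_zero] using h

theorem sin_le_two_mul_sin_half {x : ℝ} (hx₀ : 0 ≤ x) (hx : x ≤ 2 * π) :
    sin x ≤ 2 * sin (x / 2) := by
  have hsin : 0 ≤ sin (x / 2) := sin_nonneg_of_nonneg_of_le_pi (by linarith) (by linarith)
  calc sin x = 2 * sin (x / 2) * cos (x / 2) := by rw [← sin_two_mul, mul_div_cancel₀ x two_ne_zero]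
    _ ≤ 2 * sin (x / 2) * 1 := by gcongr; exact cos_le_one _
    _ = 2 * sin (x / 2) := mul_one _

theorem half_mul_sin_le_sin_half_mul {t x : ℝ} (ht₀ : 0 ≤ t) (ht₁ : t ≤ 1) (hx₀ : 0 ≤ x)
    (hx : x ≤ 2 * π) : t / 2 * sin x ≤ sin (t * x / 2) :=
  calc t / 2 * sin x ≤ t / 2 * (2 * sin (x / 2)) := by gcongr; exact sin_le_two_mul_sin_half hx₀ hx
    _ = t * sin (x / 2) := by ring
    _ ≤ sin (t * (x / 2)) := mul_sin_le_sin_mul ht₀ ht₁ (by linarith) (by linarith)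
    _ = sin (t * x / 2) := by rw [mul_div_assoc]

end Real

theorem h_lower_bound (α : ℝ) (hα : α ∈ Set.Ioo (0 : ℝ) 1)
    (x : ℝ) (hx : x ∈ Set.Icc 0 π) :
    Real.cos (α * π / 2) ≤
      (2 + α) / 2 * Real.cos (α / 2 * (π - x)) - α / 2 * Real.cos (α / 2 * (π - x) - x) ∧
    0 ≤ Real.cos (α * π / 2) := by
  obtain ⟨hα₀, hα₁⟩ := hα
  obtain ⟨hx₀, hxπ⟩ := hx
  set θ := α / 2 * (π - x) with hθ
  have hθ₀ : 0 ≤ θ := mul_nonneg (by linarith) (by linarith)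
  have hθπ : θ ≤ π / 2 := by nlinarith [pi_pos]
  have hcos : 0 ≤ cos θ := cos_nonneg_of_mem_Icc ⟨by linarith, hθπ⟩
  have hsin : 0 ≤ sin θ := sin_nonneg_of_nonneg_of_le_pi hθ₀ (by linarith)
  have hcos_le : cos (α * x / 2) ≤ (2 + α) / 2 - α / 2 * cos x := by
    nlinarith [cos_le_one (α * x / 2), cos_le_one x]
  have hsin_le : α / 2 * sin x ≤ sin (α * x / 2) :=
    half_mul_sin_le_sin_half_mul hα₀.le hα₁.le hx₀ (by linarith [pi_pos])
  refine ⟨?_, cos_nonneg_of_mem_Icc ⟨by nlinarith [pi_pos], by nlinarith [pi_pos]⟩⟩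
  calc cos (α * π / 2) = cos θ * cos (α * x / 2) - sin θ * sin (α * x / 2) := by
        rw [← cos_add, hθ]; ring_nf
    _ ≤ cos θ * ((2 + α) / 2 - α / 2 * cos x) - sin θ * (α / 2 * sin x) := by gcongr
    _ = _ := by rw [cos_sub]; ring
end

section
/- For α ∈ (0,1), the generating function f(α,x) = λ₀^{(α)} + Σ_{k≥1} λ_k^{(α)} cos(kx), where λ₀^{(α)} = (2+α)/2 · g₀^{(α)} and λ_k^{(α)} = (2+α)/2 · g_k^{(α)} − (α/2) g_{k−1}^{(α)} for k ≥ 1 with g_k^{(α)} = (−1)^k(α choose k), is nonnegative for all x ∈ [0, π]; indeed f(α,x) = (2 sin(x/2))^α · [ ((2+α)/2) cos((α/2)(π−x)) − (α/2) cos((α/2)(π−x) − x) ] ≥ 0. -/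
/-!
Inside the unit disk the Grünwald coefficients are the Taylor coefficients of `(1 - w) ^ α`
(binomial series). For `0 < α ≤ 1` they are absolutely summable, since `|g_{k+1}^{(α)}|`
telescopes against the antitone nonnegative sequence `g_k^{(α-1)}`, so the identity extends by
continuity to the closed disk. Hence `∑ λ_{k+1} w^{k+1} = ((2+α)/2 - (α/2) w) (1 - w)^α - (2+α)/2`
for `‖w‖ ≤ 1`, and at `w = e^{ix}` the polar form `1 - e^{ix} = 2 sin (x/2) e^{i(x-π)/2}` yields the
closed form after taking real parts.

With `a = α/2` and `y = π - x` the bracket is `(1+a) cos (a y) + a cos ((1+a) y)`. Its derivative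
`-a(1+a) (sin (a y) + sin ((1+a) y)) = -2a(1+a) sin ((1+2a) y/2) cos (y/2)` is `≤ 0` on `[0, π]`,
and its value at `y = π` is `cos (a π) ≥ 0`.
-/

open Real

/-- Grünwald coefficients `g_k^{(α)} = (-1)^k (α choose k)`. -/
noncomputable def grunwaldG (α : ℝ) (k : ℕ) : ℝ :=
  (-1) ^ k * ((∏ i ∈ Finset.range k, (α - i)) / (k.factorial : ℝ))

/-- Weighted coefficients `λ_k^{(α)}`. -/
noncomputable def lamG (α : ℝ) : ℕ → ℝ
  | 0 => (2 + α) / 2 * grunwaldG α 0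
  | k + 1 => (2 + α) / 2 * grunwaldG α (k + 1) - α / 2 * grunwaldG α k

lemma grunwaldG_zero (α : ℝ) : grunwaldG α 0 = 1 := by simp [grunwaldG]

lemma grunwaldG_succ (α : ℝ) (n : ℕ) :
    grunwaldG α (n + 1) = grunwaldG α n * ((n - α) / (n + 1)) := by
  rw [grunwaldG, grunwaldG, Finset.prod_range_succ, Nat.factorial_succ, pow_succ]
  push_cast
  field_simp
  ring

lemma grunwaldG_eq_choose (α : ℝ) (n : ℕ) : grunwaldG α n = (-1) ^ n * Ring.choose α n := by
  rw [grunwaldG, Ring.choose_eq_smul, ← Polynomial.aeval_eq_smeval, Polynomial.aeval_def,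
    Polynomial.eval₂_eq_eval_map, descPochhammer_map, descPochhammer_eval_eq_prod_range,
    smul_eq_mul, inv_mul_eq_div]

lemma grunwaldG_succ_eq_sub (α : ℝ) (n : ℕ) :
    grunwaldG α (n + 1) = grunwaldG (α - 1) (n + 1) - grunwaldG (α - 1) n := by
  have pascal := Ring.choose_succ_succ (α - 1) n
  rw [sub_add_cancel] at pascal
  simp only [grunwaldG_eq_choose, pascal, pow_succ]
  ring

lemma grunwaldG_nonneg {β : ℝ} (hβ : β ≤ 0) (n : ℕ) : 0 ≤ grunwaldG β n := by
  induction n with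
  | zero => simp [grunwaldG_zero]
  | succ n ih =>
    rw [grunwaldG_succ]
    exact mul_nonneg ih (div_nonneg (by linarith [n.cast_nonneg (α := ℝ)]) (by positivity))

lemma grunwaldG_succ_le {β : ℝ} (hβ₁ : -1 ≤ β) (hβ₀ : β ≤ 0) (n : ℕ) :
    grunwaldG β (n + 1) ≤ grunwaldG β n := by
  rw [grunwaldG_succ]
  refine mul_le_of_le_one_right (grunwaldG_nonneg hβ₀ n) ?_
  rw [div_le_one (by positivity)]
  linarith

lemma abs_grunwaldG_succ {α : ℝ} (hα₀ : 0 ≤ α) (hα₁ : α ≤ 1) (n : ℕ) :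
    |grunwaldG α (n + 1)| = grunwaldG (α - 1) n - grunwaldG (α - 1) (n + 1) := by
  rw [grunwaldG_succ_eq_sub, abs_sub_comm, abs_of_nonneg]
  linarith [grunwaldG_succ_le (β := α - 1) (by linarith) (by linarith) n]

lemma summable_abs_grunwaldG {α : ℝ} (hα₀ : 0 ≤ α) (hα₁ : α ≤ 1) :
    Summable fun n ↦ |grunwaldG α n| := by
  refine (summable_nat_add_iff 1).mp (summable_of_sum_range_le (c := 1) (fun _ ↦ abs_nonneg _)
    fun N ↦ ?_)
  rw [Finset.sum_congr rfl fun n _ ↦ abs_grunwaldG_succ hα₀ hα₁ n, Finset.sum_range_sub',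
    grunwaldG_zero]
  linarith [grunwaldG_nonneg (β := α - 1) (by linarith) N]

lemma hasSum_grunwaldG_mul_pow_of_norm_lt_one (α : ℝ) {w : ℂ} (hw : ‖w‖ < 1) :
    HasSum (fun n ↦ (grunwaldG α n : ℂ) * w ^ n) ((1 - w) ^ (α : ℂ)) := by
  have hmem : -w ∈ Metric.eball (0 : ℂ) 1 := by
    rw [← ENNReal.ofReal_one, Metric.eball_ofReal]
    simpa using hw
  have h := (Complex.one_add_cpow_hasFPowerSeriesOnBall_zero (a := α)).hasSum hmem
  simp only [binomialSeries, FormalMultilinearSeries.ofScalars_apply_eq, zero_add] at h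
  rw [sub_eq_add_neg]
  refine h.congr_fun fun n ↦ ?_
  rw [grunwaldG_eq_choose, smul_eq_mul, neg_pow]
  push_cast
  ring

lemma hasSum_grunwaldG_mul_pow {α : ℝ} (hα₀ : 0 < α) (hα₁ : α ≤ 1) {w : ℂ} (hw : ‖w‖ ≤ 1) :
    HasSum (fun n ↦ (grunwaldG α n : ℂ) * w ^ n) ((1 - w) ^ (α : ℂ)) := by
  have hsum : Summable fun n ↦ |grunwaldG α n| := summable_abs_grunwaldG hα₀.le hα₁
  have hbound : ∀ n, ∀ w ∈ Metric.closedBall (0 : ℂ) 1,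
      ‖(grunwaldG α n : ℂ) * w ^ n‖ ≤ |grunwaldG α n| := fun n v hv ↦ by
    rw [norm_mul, norm_pow, Complex.norm_real, Real.norm_eq_abs]
    exact mul_le_of_le_one_right (abs_nonneg _)
      (pow_le_one₀ (norm_nonneg v) (by simpa using hv))
  have hseries : ContinuousOn (fun w : ℂ ↦ ∑' n, (grunwaldG α n : ℂ) * w ^ n)
      (Metric.closedBall 0 1) :=
    continuousOn_tsum (fun n ↦ by fun_prop) hsum hbound
  -- `(1 - w) ^ α` stays continuous at the branch point `w = 1` because `0 < α`
  have hpow : ContinuousOn (fun w : ℂ ↦ (1 - w) ^ (α : ℂ)) (Metric.closedBall 0 1) := by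
    refine fun v hv ↦ ((Complex.continuousAt_cpow_const_of_re_pos (Or.inl ?_)
      (by simpa using hα₀)).comp (by fun_prop)).continuousWithinAt
    have := (Complex.re_le_norm v).trans (by simpa using hv)
    simp only [Complex.sub_re, Complex.one_re]
    linarith
  have heq : Set.EqOn (fun w : ℂ ↦ ∑' n, (grunwaldG α n : ℂ) * w ^ n)
      (fun w ↦ (1 - w) ^ (α : ℂ)) (Metric.closedBall 0 1) :=
    Set.EqOn.of_subset_closure
      (fun v hv ↦ (hasSum_grunwaldG_mul_pow_of_norm_lt_one α (by simpa using hv)).tsum_eq)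
      hseries hpow Metric.ball_subset_closedBall (by rw [closure_ball _ one_ne_zero])
  have hw' : w ∈ Metric.closedBall (0 : ℂ) 1 := by simpa using hw
  have hval : ∑' n, (grunwaldG α n : ℂ) * w ^ n = (1 - w) ^ (α : ℂ) := heq hw'
  rw [← hval]
  exact (Summable.of_norm_bounded hsum fun n ↦ hbound n w hw').hasSum

open Complex in
lemma ofReal_mul_exp_mul_I_cpow {r θ α : ℝ} (hr : 0 ≤ r) (hθ : θ ∈ Set.Ioc (-π) π)
    (hα : α ≠ 0) :
    ((r : ℂ) * exp (θ * I)) ^ (α : ℂ) = ((r ^ α : ℝ) : ℂ) * exp ((α * θ : ℝ) * I) := by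
  rcases hr.eq_or_lt with rfl | hr
  · simp [Complex.zero_cpow (ofReal_ne_zero.mpr hα), Real.zero_rpow hα]
  rw [cpow_def_of_ne_zero (mul_ne_zero (ofReal_ne_zero.mpr hr.ne') (exp_ne_zero _)),
    log_ofReal_mul hr (exp_ne_zero _), log_exp (by simpa using hθ.1) (by simpa using hθ.2),
    Real.rpow_def_of_pos hr, ofReal_exp, ← Complex.exp_add]
  push_cast
  ring_nf

open Complex in
lemma one_sub_exp_mul_I (x : ℝ) :
    1 - exp (x * I) = ((2 * Real.sin (x / 2) : ℝ) : ℂ) * exp (((x - π) / 2 : ℝ) * I) := by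
  have hsplit : exp (((x - π) / 2 : ℝ) * I) = exp (x / 2 * I) * -I := by
    have hI : -I = exp (-(π / 2 * I)) := by rw [Complex.exp_neg, exp_pi_div_two_mul_I, inv_I]
    rw [hI, ← Complex.exp_add]
    push_cast
    ring_nf
  have hsq : exp (x * I) = exp (x / 2 * I) ^ 2 := by
    rw [← Complex.exp_nat_mul]; push_cast; ring_nf
  rw [hsplit, hsq, ofReal_mul, ofReal_sin, Complex.sin]
  push_cast
  rw [neg_mul, Complex.exp_neg]
  have hne := exp_ne_zero (x / 2 * I)
  field_simp
  ring_nf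
  rw [I_sq]
  ring

lemma two_mul_sin_half_nonneg {x : ℝ} (hx : x ∈ Set.Icc 0 (2 * π)) :
    0 ≤ 2 * Real.sin (x / 2) :=
  mul_nonneg zero_le_two
    (Real.sin_nonneg_of_nonneg_of_le_pi (by linarith [hx.1]) (by linarith [hx.2]))

lemma one_sub_exp_mul_I_cpow {α x : ℝ} (hα : α ≠ 0) (hx : x ∈ Set.Icc 0 (2 * π)) :
    (1 - Complex.exp (x * Complex.I)) ^ (α : ℂ)
      = (((2 * Real.sin (x / 2)) ^ α : ℝ) : ℂ)
        * Complex.exp ((α * ((x - π) / 2) : ℝ) * Complex.I) := by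
  rw [one_sub_exp_mul_I, ofReal_mul_exp_mul_I_cpow (two_mul_sin_half_nonneg hx) _ hα]
  constructor <;> linarith [hx.1, hx.2, Real.pi_pos]

lemma hasSum_lamG_succ_mul_pow {α : ℝ} (hα₀ : 0 < α) (hα₁ : α ≤ 1) {w : ℂ} (hw : ‖w‖ ≤ 1) :
    HasSum (fun k ↦ (lamG α (k + 1) : ℂ) * w ^ (k + 1))
      ((2 + α) / 2 * ((1 - w) ^ (α : ℂ) - 1) - α / 2 * w * (1 - w) ^ (α : ℂ)) := by
  have hg := hasSum_grunwaldG_mul_pow hα₀ hα₁ hw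
  have hg_succ : HasSum (fun k ↦ (grunwaldG α (k + 1) : ℂ) * w ^ (k + 1))
      ((1 - w) ^ (α : ℂ) - 1) := by
    simpa [grunwaldG_zero] using (hasSum_nat_add_iff' 1).mpr hg
  refine ((hg_succ.mul_left ((2 + α) / 2 : ℂ)).sub (hg.mul_left (α / 2 * w : ℂ))).congr_fun
    fun k ↦ ?_
  simp only [lamG]
  push_cast
  ring

lemma hasSum_lamG_succ_mul_cos {α x : ℝ} (hα₀ : 0 < α) (hα₁ : α ≤ 1)
    (hx : x ∈ Set.Icc 0 (2 * π)) :
    HasSum (fun k : ℕ ↦ lamG α (k + 1) * Real.cos ((k + 1 : ℕ) * x))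
      ((2 * Real.sin (x / 2)) ^ α *
          ((2 + α) / 2 * Real.cos (α / 2 * (π - x)) - α / 2 * Real.cos (α / 2 * (π - x) - x))
        - (2 + α) / 2) := by
  have hw : ‖Complex.exp (x * Complex.I)‖ ≤ 1 := (Complex.norm_exp_ofReal_mul_I x).le
  have h := (hasSum_lamG_succ_mul_pow hα₀ hα₁ hw).mapL Complex.reCLM
  have hrot : ∀ r φ : ℝ, Complex.exp (x * Complex.I) * (r * Complex.exp (φ * Complex.I))
      = r * Complex.exp ((x + φ : ℝ) * Complex.I) := fun r φ ↦ by
    rw [mul_left_comm, ← Complex.exp_add]; push_cast; ring_nf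
  have hpow : ∀ k : ℕ, Complex.exp (x * Complex.I) ^ (k + 1)
      = Complex.exp (((k + 1 : ℕ) * x : ℝ) * Complex.I) := fun k ↦ by
    rw [← Complex.exp_nat_mul]; push_cast; ring_nf
  have hcos₁ : Real.cos (α * ((x - π) / 2)) = Real.cos (α / 2 * (π - x)) := by
    rw [← Real.cos_neg]; ring_nf
  have hcos₂ : Real.cos (x + α * ((x - π) / 2)) = Real.cos (α / 2 * (π - x) - x) := by
    rw [← Real.cos_neg]; ring_nf
  rw [one_sub_exp_mul_I_cpow hα₀.ne' hx, mul_assoc (α / 2 : ℂ), hrot] at h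
  simp only [hpow, Complex.reCLM_apply, Complex.sub_re, Complex.mul_re, Complex.ofReal_re,
    Complex.ofReal_im, Complex.exp_ofReal_mul_I_re, Complex.exp_ofReal_mul_I_im,
    Complex.div_ofNat_re, Complex.div_ofNat_im, Complex.add_re, Complex.add_im, Complex.re_ofNat,
    Complex.im_ofNat, Complex.one_re, zero_mul, sub_zero, add_zero, zero_div, hcos₁, hcos₂] at h
  convert h using 1
  ring

lemma sin_mul_add_sin_one_add_mul_nonneg {a y : ℝ} (ha₀ : 0 ≤ a) (ha : a ≤ 1 / 2)
    (hy : y ∈ Set.Icc 0 π) : 0 ≤ Real.sin (a * y) + Real.sin ((1 + a) * y) := by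
  rw [Real.sin_add_sin, show (a * y + (1 + a) * y) / 2 = (1 + 2 * a) / 2 * y by ring,
    show (a * y - (1 + a) * y) / 2 = -(y / 2) by ring, Real.cos_neg]
  have hs : 0 ≤ Real.sin ((1 + 2 * a) / 2 * y) :=
    Real.sin_nonneg_of_nonneg_of_le_pi (by nlinarith [hy.1])
      (by nlinarith [hy.1, hy.2])
  have hc : 0 ≤ Real.cos (y / 2) :=
    Real.cos_nonneg_of_mem_Icc ⟨by linarith [hy.1, Real.pi_pos], by linarith [hy.2]⟩
  positivity

lemma one_add_mul_cos_mul_add_mul_cos_nonneg {a y : ℝ} (ha₀ : 0 ≤ a) (ha : a ≤ 1 / 2)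
    (hy : y ∈ Set.Icc 0 π) : 0 ≤ (1 + a) * Real.cos (a * y) + a * Real.cos ((1 + a) * y) := by
  set Φ : ℝ → ℝ := fun y ↦ (1 + a) * Real.cos (a * y) + a * Real.cos ((1 + a) * y)
  have hderiv : ∀ y, HasDerivAt Φ
      (-(a * (1 + a)) * (Real.sin (a * y) + Real.sin ((1 + a) * y))) y := fun y ↦ by
    have h₁ := ((hasDerivAt_id y).const_mul a).cos.const_mul (1 + a)
    have h₂ := ((hasDerivAt_id y).const_mul (1 + a)).cos.const_mul a
    exact (h₁.add h₂).congr_deriv (by simp only [id]; ring)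
  have hanti : AntitoneOn Φ (Set.Icc 0 π) :=
    antitoneOn_of_hasDerivWithinAt_nonpos (convex_Icc 0 π)
      (fun y _ ↦ (hderiv y).continuousAt.continuousWithinAt)
      (fun y _ ↦ (hderiv y).hasDerivWithinAt)
      (fun y hy ↦ by
        rw [interior_Icc] at hy
        have := sin_mul_add_sin_one_add_mul_nonneg ha₀ ha (Set.Ioo_subset_Icc_self hy)
        have : 0 ≤ a * (1 + a) := by positivity
        nlinarith)
  have hπ : Φ π = Real.cos (a * π) := by
    simp only [Φ]
    rw [show (1 + a) * π = a * π + π by ring, Real.cos_add_pi]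
    ring
  have hcos : 0 ≤ Real.cos (a * π) :=
    Real.cos_nonneg_of_mem_Icc ⟨by nlinarith [Real.pi_pos], by nlinarith [Real.pi_pos]⟩
  exact hcos.trans (hπ ▸ hanti hy ⟨Real.pi_pos.le, le_rfl⟩ hy.2)

theorem generating_function_nonneg (α : ℝ) (hα : α ∈ Set.Ioo (0 : ℝ) 1)
    (x : ℝ) (hx : x ∈ Set.Icc 0 π) :
    lamG α 0 + ∑' k : ℕ, lamG α (k + 1) * Real.cos ((k + 1 : ℕ) * x)
      = (2 * Real.sin (x / 2)) ^ α *
          ((2 + α) / 2 * Real.cos (α / 2 * (π - x)) - α / 2 * Real.cos (α / 2 * (π - x) - x)) ∧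
    0 ≤ lamG α 0 + ∑' k : ℕ, lamG α (k + 1) * Real.cos ((k + 1 : ℕ) * x) := by
  have hx' : x ∈ Set.Icc 0 (2 * π) := ⟨hx.1, by linarith [hx.2, Real.pi_pos]⟩
  have hbracket : 0 ≤ (2 + α) / 2 * Real.cos (α / 2 * (π - x))
      - α / 2 * Real.cos (α / 2 * (π - x) - x) := by
    have h := one_add_mul_cos_mul_add_mul_cos_nonneg (a := α / 2) (y := π - x)
      (by linarith [hα.1]) (by linarith [hα.2]) ⟨by linarith [hx.2], by linarith [hx.1]⟩
    rw [show α / 2 * (π - x) - x = (1 + α / 2) * (π - x) - π by ring, Real.cos_sub_pi]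
    linarith
  have hlam₀ : lamG α 0 = (2 + α) / 2 := by rw [lamG, grunwaldG_zero, mul_one]
  rw [(hasSum_lamG_succ_mul_cos hα.1 hα.2.le hx').tsum_eq, hlam₀, add_sub_cancel]
  exact ⟨rfl, mul_nonneg (Real.rpow_nonneg (two_mul_sin_half_nonneg hx') α) hbracket⟩
end

section
/- For α ∈ (0,1) and x ∈ (0, π], the function g(α,x) = (1 − α/2)·cos((α/2)(π − x)) + (α/2)·cos(x + (α/2)(π − x)) satisfies ∂g/∂α (α,x) = −sin(x/2)·sin(x/2 + (α/2)(π − x)) − (1 − α/2)·sin((α/2)(π − x))·(π − x)/2 − (α/2)·sin(x + (α/2)(π − x))·(π − x)/2 ≤ 0. -/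
/-!
Differentiating in `α` gives `-½ cos θ + ½ cos (x + θ)` plus two sine terms, with
`θ = (α/2)(π - x)`; the sum-to-product formula turns the cosine difference into
`-sin (x/2) sin (x/2 + θ)`. For `α ∈ [0, 2]` and `x ∈ [0, π]` every sine that appears has its
argument in `[0, π]`, so all three terms of the derivative are nonpositive.
-/

open Real

theorem Real.cos_add_sub_cos (x θ : ℝ) :
    cos (x + θ) - cos θ = -2 * sin (x / 2 + θ) * sin (x / 2) := by
  rw [cos_sub_cos]
  congr 3 <;> ring

theorem hasDerivAt_interpolated_cos (x L α : ℝ) :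
    HasDerivAt
      (fun a : ℝ => (1 - a / 2) * cos (a / 2 * L) + a / 2 * cos (x + a / 2 * L))
      (-(sin (x / 2) * sin (x / 2 + α / 2 * L))
        - (1 - α / 2) * sin (α / 2 * L) * (L / 2)
        - α / 2 * sin (x + α / 2 * L) * (L / 2)) α := by
  have hθ : HasDerivAt (fun a : ℝ => a / 2 * L) (L / 2) α :=
    (((hasDerivAt_id α).div_const 2).mul_const L).congr_deriv (by ring)
  have hweight : HasDerivAt (fun a : ℝ => a / 2) (1 / 2) α := (hasDerivAt_id α).div_const 2
  have hsum := ((hweight.const_sub 1).mul hθ.cos).add (hweight.mul (hθ.const_add x).cos)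
  refine hsum.congr_deriv ?_
  linear_combination (1 / 2 : ℝ) * cos_add_sub_cos x (α / 2 * L)

theorem interpolated_cos_deriv_nonpos {α x : ℝ} (hα₀ : 0 ≤ α) (hα₂ : α ≤ 2)
    (hx₀ : 0 ≤ x) (hxπ : x ≤ π) :
    -(sin (x / 2) * sin (x / 2 + α / 2 * (π - x)))
        - (1 - α / 2) * sin (α / 2 * (π - x)) * ((π - x) / 2)
        - α / 2 * sin (x + α / 2 * (π - x)) * ((π - x) / 2) ≤ 0 := by
  have hL : 0 ≤ π - x := by linarith
  have hθ₀ : 0 ≤ α / 2 * (π - x) := by positivity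
  have hθL : α / 2 * (π - x) ≤ π - x := by nlinarith
  have s₁ : 0 ≤ sin (x / 2) := sin_nonneg_of_nonneg_of_le_pi (by linarith) (by linarith)
  have s₂ : 0 ≤ sin (x / 2 + α / 2 * (π - x)) :=
    sin_nonneg_of_nonneg_of_le_pi (by linarith) (by linarith)
  have s₃ : 0 ≤ sin (α / 2 * (π - x)) := sin_nonneg_of_nonneg_of_le_pi hθ₀ (by linarith)
  have s₄ : 0 ≤ sin (x + α / 2 * (π - x)) :=
    sin_nonneg_of_nonneg_of_le_pi (by linarith) (by linarith)
  have t₁ := mul_nonneg s₁ s₂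
  have t₂ := mul_nonneg (mul_nonneg (by linarith : (0 : ℝ) ≤ 1 - α / 2) s₃) (by positivity : (0 : ℝ) ≤ (π - x) / 2)
  have t₃ := mul_nonneg (mul_nonneg (by positivity : (0 : ℝ) ≤ α / 2) s₄) (by positivity : (0 : ℝ) ≤ (π - x) / 2)
  linarith

theorem g_deriv_alpha_nonpos (α : ℝ) (hα : α ∈ Set.Ioo (0 : ℝ) 1)
    (x : ℝ) (hx : x ∈ Set.Ioc 0 π) :
    HasDerivAt
      (fun a : ℝ =>
        (1 - a / 2) * Real.cos (a / 2 * (π - x)) + a / 2 * Real.cos (x + a / 2 * (π - x)))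
      (-(Real.sin (x / 2) * Real.sin (x / 2 + α / 2 * (π - x)))
        - (1 - α / 2) * Real.sin (α / 2 * (π - x)) * ((π - x) / 2)
        - α / 2 * Real.sin (x + α / 2 * (π - x)) * ((π - x) / 2)) α ∧
    (-(Real.sin (x / 2) * Real.sin (x / 2 + α / 2 * (π - x)))
        - (1 - α / 2) * Real.sin (α / 2 * (π - x)) * ((π - x) / 2)
        - α / 2 * Real.sin (x + α / 2 * (π - x)) * ((π - x) / 2)) ≤ 0 :=
  ⟨hasDerivAt_interpolated_cos x (π - x) α,
    interpolated_cos_deriv_nonpos hα.1.le (by linarith [hα.2]) hx.1.le hx.2⟩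
end

section
/- For α ∈ (0,1) and all x ∈ (0, π], the function g(α,x) = (1 − α/2)·cos((α/2)(π − x)) + (α/2)·cos(x + (α/2)(π − x)) satisfies g(α,x) ≥ g(1,x) = 0, hence g(α,x) ≥ 0. -/
/-! With `t = (π - x) / 2` one has `g(α, x) = (1 - α/2) cos (α t) - (α/2) cos ((2 - α) t)`, which
vanishes at `α = 1`. For `α ≤ 1` and `t ≤ π/2` the angles satisfy `0 ≤ α t ≤ (2 - α) t ≤ π`, so
monotonicity of `cos` on `[0, π]` gives `g(α, x) ≥ (1 - α) cos (α t) ≥ 0`. -/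

open Real

noncomputable def g (α x : ℝ) : ℝ :=
  (1 - α / 2) * cos (α / 2 * (π - x)) + α / 2 * cos (x + α / 2 * (π - x))

theorem g_eq_sub_cos (α x : ℝ) :
    g α x = (1 - α / 2) * cos (α * ((π - x) / 2)) - α / 2 * cos ((2 - α) * ((π - x) / 2)) := by
  have hangle : x + α / 2 * (π - x) = π - (2 - α) * ((π - x) / 2) := by ring
  rw [g, hangle, cos_pi_sub, show α / 2 * (π - x) = α * ((π - x) / 2) by ring]
  ring

theorem g_one (x : ℝ) : g 1 x = 0 := by
  rw [g_eq_sub_cos]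
  ring_nf

theorem weighted_cos_sub_cos_nonneg {a t : ℝ} (ha₀ : 0 ≤ a) (ha₁ : a ≤ 1) (ht₀ : 0 ≤ t)
    (ht₁ : t ≤ π / 2) : 0 ≤ (1 - a / 2) * cos (a * t) - a / 2 * cos ((2 - a) * t) := by
  have hcos_le : cos ((2 - a) * t) ≤ cos (a * t) :=
    cos_le_cos_of_nonneg_of_le_pi (by positivity) (by nlinarith) (by nlinarith)
  have hcos_nonneg : 0 ≤ cos (a * t) :=
    cos_nonneg_of_mem_Icc ⟨by nlinarith [pi_pos], by nlinarith⟩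
  calc 0 ≤ (1 - a) * cos (a * t) := mul_nonneg (by linarith) hcos_nonneg
    _ = (1 - a / 2) * cos (a * t) - a / 2 * cos (a * t) := by ring
    _ ≤ (1 - a / 2) * cos (a * t) - a / 2 * cos ((2 - a) * t) := by gcongr

theorem g_nonneg_of_mem_Icc {α x : ℝ} (hα : α ∈ Set.Icc (0 : ℝ) 1) (hx : x ∈ Set.Icc 0 π) :
    0 ≤ g α x := by
  rw [g_eq_sub_cos]
  exact weighted_cos_sub_cos_nonneg hα.1 hα.2 (by linarith [hx.2]) (by linarith [hx.1])

theorem g_nonneg (α : ℝ) (hα : α ∈ Set.Ioo (0 : ℝ) 1)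
    (x : ℝ) (hx : x ∈ Set.Ioc 0 π) :
    ((1 : ℝ) - 1 / 2) * Real.cos ((1 : ℝ) / 2 * (π - x))
        + (1 : ℝ) / 2 * Real.cos (x + (1 : ℝ) / 2 * (π - x)) = 0 ∧
    ((1 : ℝ) - 1 / 2) * Real.cos ((1 : ℝ) / 2 * (π - x))
        + (1 : ℝ) / 2 * Real.cos (x + (1 : ℝ) / 2 * (π - x)) ≤
      (1 - α / 2) * Real.cos (α / 2 * (π - x)) + α / 2 * Real.cos (x + α / 2 * (π - x)) ∧
    0 ≤ (1 - α / 2) * Real.cos (α / 2 * (π - x)) + α / 2 * Real.cos (x + α / 2 * (π - x)) := by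
  show g 1 x = 0 ∧ g 1 x ≤ g α x ∧ 0 ≤ g α x
  have hg : 0 ≤ g α x :=
    g_nonneg_of_mem_Icc (Set.Ioo_subset_Icc_self hα) (Set.Ioc_subset_Icc_self hx)
  exact ⟨g_one x, g_one x ▸ hg, hg⟩
end

section
/- (Fourth-order compact identity) If f ∈ C⁶[x_{i−1}, x_{i+1}] with x_{i±1} = x_i ± h, then (1/12)[f''(x_{i−1}) + 10 f''(x_i) + f''(x_{i+1})] = (1/h²)[f(x_{i−1}) − 2f(x_i) + f(x_{i+1})] + (h⁴/360) ∫₀¹ [f⁽⁶⁾(x_i − sh) + f⁽⁶⁾(x_i + sh)] ζ(s) ds, where ζ(s) = (1−s)³[5 − 3(1−s)²]. -/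
/-!
Write `g s = f⁽⁶⁾(x - s h) + f⁽⁶⁾(x + s h)`. Taylor's formula with integral remainder, rescaled
to `s ∈ [0, 1]` and added at `x ± h`, kills the odd-order terms:
`f(x - h) + f(x + h) = 2 f + h² f'' + h⁴/12 f⁽⁴⁾ + h⁶/120 ∫ (1 - s)⁵ g` and
`f''(x - h) + f''(x + h) = 2 f'' + h² f⁽⁴⁾ + h⁴/6 ∫ (1 - s)³ g`.
In the compact combination the `f''` and `f⁽⁴⁾` terms cancel, and what is left,
`h⁴/72 ∫ (1 - s)³ g - h⁴/120 ∫ (1 - s)⁵ g`, is `h⁴/360 ∫ g ζ` because `ζ = 5 (1 - s)³ - 3 (1 - s)⁵`.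
-/

open Set MeasureTheory intervalIntegral
open scoped Nat

section IteratedDerivWithin

variable {𝕜 F : Type*} [NontriviallyNormedField 𝕜] [NormedAddCommGroup F] [NormedSpace 𝕜 F]
  {f : 𝕜 → F} {s t : Set 𝕜}

theorem iteratedDerivWithin_iteratedDerivWithin (k m : ℕ) :
    iteratedDerivWithin k (iteratedDerivWithin m f s) s = iteratedDerivWithin (k + m) f s := by
  have h (n : ℕ) (g : 𝕜 → F) :
      iteratedDerivWithin n g s = (fun g : 𝕜 → F => derivWithin g s)^[n] g :=
    funext fun _ => iteratedDerivWithin_eq_iterate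
  rw [h, h, h, Function.iterate_add_apply]

theorem ContDiffOn.iteratedDerivWithin {n m : ℕ} (hf : ContDiffOn 𝕜 (n + m : ℕ) f s)
    (hs : UniqueDiffOn 𝕜 s) : ContDiffOn 𝕜 n (iteratedDerivWithin m f s) s := by
  induction m generalizing n with
  | zero => simpa using hf
  | succ m ih =>
    rw [iteratedDerivWithin_succ]
    exact (ih (n := n + 1) (by rwa [add_right_comm])).derivWithin hs le_rfl

theorem iteratedDerivWithin_subset {n : ℕ} {x : 𝕜} (st : s ⊆ t) (hs : UniqueDiffOn 𝕜 s)
    (ht : UniqueDiffOn 𝕜 t) (hf : ContDiffOn 𝕜 n f t) (hx : x ∈ s) :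
    iteratedDerivWithin n f s x = iteratedDerivWithin n f t x := by
  simp only [iteratedDerivWithin_eq_iteratedFDerivWithin,
    iteratedFDerivWithin_subset st hs ht hf hx]

end IteratedDerivWithin

theorem self_mem_uIcc_sub_add (x h : ℝ) : x ∈ uIcc (x - h) (x + h) := by
  rcases le_total 0 h with h0 | h0 <;> simp [mem_uIcc, h0]

section AffineComp

variable {F : Type*} [TopologicalSpace F] {g : ℝ → F} {x h : ℝ}

theorem ContinuousOn.comp_add_mul_uIcc (hg : ContinuousOn g (uIcc x (x + h))) :
    ContinuousOn (fun s => g (x + s * h)) (uIcc 0 1) := by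
  refine hg.comp (by fun_prop) fun s hs => ?_
  rw [uIcc_of_le zero_le_one] at hs
  rw [← segment_eq_uIcc, segment_eq_image']
  exact ⟨s, hs, by simp [smul_eq_mul]⟩

theorem ContinuousOn.comp_sub_mul_uIcc (hg : ContinuousOn g (uIcc x (x - h))) :
    ContinuousOn (fun s => g (x - s * h)) (uIcc 0 1) := by
  rw [sub_eq_add_neg] at hg
  simpa only [mul_neg, ← sub_eq_add_neg] using hg.comp_add_mul_uIcc

end AffineComp

variable {F : Type*} [NormedAddCommGroup F] [NormedSpace ℝ F] [CompleteSpace F]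
  {f : ℝ → F} {t : Set ℝ} {x h : ℝ} {n : ℕ}

theorem taylor_integral_remainder_comp_add_mul (hh : h ≠ 0) (ht : UniqueDiffOn ℝ t)
    (hxt : uIcc x (x + h) ⊆ t) (hf : ContDiffOn ℝ (n + 1 : ℕ) f t) :
    f (x + h) = ∑ k ∈ Finset.range (n + 1), (h ^ k / k !) • iteratedDerivWithin k f t x
      + (h ^ (n + 1) / n !) • ∫ s in (0 : ℝ)..1,
          (1 - s) ^ n • iteratedDerivWithin (n + 1) f t (x + s * h) := by
  have hu : UniqueDiffOn ℝ (uIcc x (x + h)) := uniqueDiffOn_uIcc (by simpa using hh)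
  have hD (k : ℕ) (hk : k ≤ n + 1) {y : ℝ} (hy : y ∈ uIcc x (x + h)) :
      iteratedDerivWithin k f (uIcc x (x + h)) y = iteratedDerivWithin k f t y :=
    iteratedDerivWithin_subset hxt hu ht (hf.of_le (by exact_mod_cast hk)) hy
  have hT := taylor_integral_remainder (hf.mono hxt)
  rw [taylor_within_apply] at hT
  rw [← sub_eq_iff_eq_add']
  convert hT using 2
  · refine Finset.sum_congr rfl fun k hk => ?_
    rw [hD k (by grind) left_mem_uIcc, add_sub_cancel_left, div_eq_inv_mul]
  · set G := fun y => ((x + h - y) ^ n / n !) • iteratedDerivWithin (n + 1) f t y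
    have hG := smul_integral_comp_add_mul (a := 0) (b := 1) G h x
    rw [mul_zero, mul_one, add_zero] at hG
    rw [integral_congr (a := x) (b := x + h) (g := G)
        fun y hy => by simp only [G, hD (n + 1) le_rfl hy],
      ← hG, ← intervalIntegral.integral_smul, ← intervalIntegral.integral_smul]
    refine integral_congr fun s _ => ?_
    simp only [G, smul_smul, mul_comm h s]
    congr 1
    rw [show x + h - (x + s * h) = h * (1 - s) by ring, mul_pow]
    ring

theorem taylor_integral_remainder_sub_add (hh : h ≠ 0) (ht : UniqueDiffOn ℝ t)
    (hxt : uIcc (x - h) (x + h) ⊆ t) (hf : ContDiffOn ℝ (n + 1 : ℕ) f t) (hn : Even (n + 1)) :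
    f (x - h) + f (x + h) =
      ∑ k ∈ Finset.range (n + 1), ((h ^ k + (-h) ^ k) / k !) • iteratedDerivWithin k f t x
        + (h ^ (n + 1) / n !) • ∫ s in (0 : ℝ)..1, (1 - s) ^ n •
            (iteratedDerivWithin (n + 1) f t (x - s * h)
              + iteratedDerivWithin (n + 1) f t (x + s * h)) := by
  have hx := self_mem_uIcc_sub_add x h
  have hsub_m : uIcc x (x - h) ⊆ t := (uIcc_subset_uIcc hx left_mem_uIcc).trans hxt
  have hsub_p : uIcc x (x + h) ⊆ t := (uIcc_subset_uIcc hx right_mem_uIcc).trans hxt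
  have hD := hf.continuousOn_iteratedDerivWithin le_rfl ht
  have hw : ContinuousOn (fun s : ℝ => (1 - s) ^ n) (uIcc 0 1) := by fun_prop
  have im := (hw.fun_smul (hD.mono hsub_m).comp_sub_mul_uIcc).intervalIntegrable (μ := volume)
  have ip := (hw.fun_smul (hD.mono hsub_p).comp_add_mul_uIcc).intervalIntegrable (μ := volume)
  have hm := taylor_integral_remainder_comp_add_mul (neg_ne_zero.2 hh) ht
    (by rwa [← sub_eq_add_neg]) hf
  rw [hn.neg_pow] at hm
  simp only [mul_neg, ← sub_eq_add_neg] at hm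
  rw [hm, taylor_integral_remainder_comp_add_mul hh ht hsub_p hf,
    integral_congr fun s _ => smul_add _ _ _, integral_add im ip]
  simp only [smul_add, add_div, add_smul, Finset.sum_add_distrib]
  abel

theorem integral_mul_zeta {g : ℝ → ℝ} (hg : IntervalIntegrable g volume 0 1) :
    ∫ s in (0 : ℝ)..1, g s * ((1 - s) ^ 3 * (5 - 3 * (1 - s) ^ 2))
      = 5 * (∫ s in (0 : ℝ)..1, (1 - s) ^ 3 * g s)
        - 3 * ∫ s in (0 : ℝ)..1, (1 - s) ^ 5 * g s := by
  have hw (k : ℕ) : IntervalIntegrable (fun s => (1 - s) ^ k * g s) volume 0 1 :=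
    hg.continuousOn_mul (by fun_prop)
  rw [← intervalIntegral.integral_const_mul, ← intervalIntegral.integral_const_mul,
    ← integral_sub ((hw 3).const_mul 5) ((hw 5).const_mul 3)]
  exact integral_congr fun s _ => by ring

theorem compact_fourth_order_identity (f : ℝ → ℝ) (x h : ℝ) (hh : 0 < h)
    (hf : ContDiffOn ℝ 6 f (Set.Icc (x - h) (x + h))) :
    (1 / 12) * (iteratedDerivWithin 2 f (Set.Icc (x - h) (x + h)) (x - h)
        + 10 * iteratedDerivWithin 2 f (Set.Icc (x - h) (x + h)) x
        + iteratedDerivWithin 2 f (Set.Icc (x - h) (x + h)) (x + h))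
      = (1 / h ^ 2) * (f (x - h) - 2 * f x + f (x + h))
        + (h ^ 4 / 360) *
          ∫ s in (0 : ℝ)..1,
            (iteratedDerivWithin 6 f (Set.Icc (x - h) (x + h)) (x - s * h)
              + iteratedDerivWithin 6 f (Set.Icc (x - h) (x + h)) (x + s * h)) *
            ((1 - s) ^ 3 * (5 - 3 * (1 - s) ^ 2)) := by
  rw [← uIcc_of_le (by linarith)] at hf ⊢
  set I := uIcc (x - h) (x + h)
  have hI : UniqueDiffOn ℝ I := uniqueDiffOn_uIcc (by linarith)
  have hx := self_mem_uIcc_sub_add x h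
  have hD := hf.continuousOn_iteratedDerivWithin le_rfl hI
  have hg := ((hD.mono (uIcc_subset_uIcc hx left_mem_uIcc)).comp_sub_mul_uIcc.fun_add
    (hD.mono (uIcc_subset_uIcc hx right_mem_uIcc)).comp_add_mul_uIcc).intervalIntegrable
    (μ := volume)
  have h5 := taylor_integral_remainder_sub_add (n := 5) hh.ne' hI subset_rfl hf (by decide)
  have h3 := taylor_integral_remainder_sub_add (n := 3) hh.ne' hI subset_rfl
    (hf.iteratedDerivWithin (m := 2) hI) (by decide)
  simp only [iteratedDerivWithin_iteratedDerivWithin, Finset.sum_range_succ,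
    Finset.sum_range_zero, iteratedDerivWithin_zero, smul_eq_mul] at h3 h5
  norm_num [Nat.factorial, neg_pow] at h3 h5
  rw [integral_mul_zeta hg]
  -- `field_simp` also rewrites `s * h` to `h * s` under the integrals, so it must see h3 and h5 too
  field_simp at h3 h5 ⊢
  linear_combination 60 * h ^ 2 * h3 - 3 / 2 * h5
end
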